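/- Closed Graph Theorem for PN-spaces: Let (V, ν) and (W, μ) be strongly complete Šerstnev PN-spaces under τ_M, and let T : V → W be a linear operator whose graph is closed, i.e., whenever x_n → x in V and Tx_n → y in W (strong topologies), then y = Tx. Then T is continuous. -/

import Mathlib

open Filter Topology Set

noncomputable section

/-- A distance distribution function: nondecreasing, with values in `[0,1]`,
left-continuous, `F 0 = 0` and `sup F = 1`. -/
def IsDDF (F : ℝ → ℝ) : Prop :=
  Monotone F ∧ (∀ t, F t ∈ Set.Icc (0:ℝ) 1) ∧
  (∀ t : ℝ, Tendsto F (nhdsWithin t (Set.Iio t)) (nhds (F t))) ∧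
  F 0 = 0 ∧ (⨆ t, F t) = 1

/-- A proper d.f.: `F t → 1` as `t → ∞`. -/
def IsProper (F : ℝ → ℝ) : Prop := Tendsto F atTop (nhds 1)

/-- The unit step function at `0`. -/
def H0 : ℝ → ℝ := fun t => if 0 < t then 1 else 0

/-- The quantile function `F̂(w) = sup {t | F t < w}`, valued in `EReal`. -/
noncomputable def qhat (F : ℝ → ℝ) (w : ℝ) : EReal :=
  sSup ((fun t : ℝ => (t : EReal)) '' {t | F t < w})

/-- The triangle function `τ_M(F,G)(x) = sup_{s+t=x} min (F s) (G t)`. -/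
noncomputable def tauM (F G : ℝ → ℝ) : ℝ → ℝ :=
  fun x => ⨆ s : ℝ, min (F s) (G (x - s))

/-- A Šerstnev probabilistic normed space under `τ_M`, with all `ν_x` proper. -/
structure SPN (V : Type*) [AddCommGroup V] [Module ℝ V] where
  nu : V → ℝ → ℝ
  ddf : ∀ x, IsDDF (nu x)
  proper : ∀ x, IsProper (nu x)
  nu_eq_iff : ∀ x, nu x = H0 ↔ x = 0
  nu_add : ∀ x y t, tauM (nu x) (nu y) t ≤ nu (x + y) t
  nu_smul : ∀ a : ℝ, a ≠ 0 → ∀ x t, nu (a • x) t = nu x (t / |a|)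

/-- The quantile seminorm `‖x‖_w = sup {t | ν_x t < w}`. -/
noncomputable def pnorm {V : Type*} [AddCommGroup V] [Module ℝ V]
    (S : SPN V) (x : V) (w : ℝ) : ℝ :=
  sSup {t | S.nu x t < w}

/-- The strong topology of a PN-space, generated by the balls of the seminorms `‖·‖_w`. -/
def strongTop {V : Type*} [AddCommGroup V] [Module ℝ V] (S : SPN V) : TopologicalSpace V :=
  TopologicalSpace.generateFrom
    {U | ∃ (x : V) (w r : ℝ), w ∈ Set.Ioo (0:ℝ) 1 ∧ 0 < r ∧
      U = {y | pnorm S (y - x) w < r}}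

/-- A strong Cauchy sequence. -/
def StrongCauchy {V : Type*} [AddCommGroup V] [Module ℝ V] (S : SPN V) (x : ℕ → V) : Prop :=
  ∀ t : ℝ, 0 < t → ∃ N, ∀ m ≥ N, ∀ n ≥ N, 1 - t < S.nu (x n - x m) t

/-- Strong convergence of a sequence to a point. -/
def StrongLim {V : Type*} [AddCommGroup V] [Module ℝ V] (S : SPN V) (x : ℕ → V) (p : V) : Prop :=
  ∀ t : ℝ, 0 < t → ∃ N, ∀ n ≥ N, 1 - t < S.nu (x n - p) t

/-- Strong completeness: every strong Cauchy sequence strongly converges. -/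
def StrongComplete {V : Type*} [AddCommGroup V] [Module ℝ V] (S : SPN V) : Prop :=
  ∀ x : ℕ → V, StrongCauchy S x → ∃ p, StrongLim S x p

/-!
The seminorms `‖·‖_w`, `w ∈ (0,1)`, generate the strong topology, and so do the countably many
levels `w = 1 - 1/(k+2)`; hence a strongly complete Šerstnev space is a Fréchet space, and in
particular a Baire space. The theorem thus reduces to the closed graph theorem for Fréchet spaces.
By Baire category, the closure of `T⁻¹' {q < ε}` is a neighbourhood of zero for every continuous
seminorm `q` on `W`. Expanding a point of that neighbourhood as a series whose terms have
geometrically small images, completeness of `W` and the closed graph remove the closure at the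
cost of doubling `ε`.
-/

open scoped Pointwise

section ClosedGraph

theorem WithSeminorms.summable_of_summable_seminorm {𝕜 ι β W : Type*} [NormedField 𝕜]
    [AddCommGroup W] [Module 𝕜 W] [UniformSpace W] [IsUniformAddGroup W] [CompleteSpace W]
    {q : SeminormFamily 𝕜 W ι} (hq : WithSeminorms q) {f : β → W}
    (hf : ∀ i, Summable fun j => q i (f j)) : Summable f := by
  refine summable_iff_vanishing.2 fun e he => ?_
  obtain ⟨⟨s, r⟩, hr, hsub⟩ := hq.hasBasis_zero_ball.mem_iff.1 he
  obtain ⟨t₀, ht₀⟩ := summable_iff_vanishing_norm.1 (summable_sum fun i _ => hf i) r hr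
  refine ⟨t₀, fun t ht => hsub <| (s.sup q).mem_ball_zero.2 ?_⟩
  calc (s.sup q) (∑ j ∈ t, f j) ≤ ∑ j ∈ t, (s.sup q) (f j) :=
        Finset.le_sum_of_subadditive _ (map_zero _).le (map_add_le_add _) _ _
    _ ≤ ∑ j ∈ t, ∑ i ∈ s, q i (f j) :=
        Finset.sum_le_sum fun j _ => by simpa using Seminorm.finset_sup_le_sum q s (f j)
    _ ≤ ‖∑ j ∈ t, ∑ i ∈ s, q i (f j)‖ := Real.le_norm_self _
    _ < r := ht₀ t ht

variable {V W : Type*} [AddCommGroup V] [TopologicalSpace V] [IsTopologicalAddGroup V]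

theorem eventually_exists_tendsto_sum [FirstCountableTopology V] {A : ℕ → Set V}
    (hA : ∀ j, closure (A j) ∈ 𝓝 0) :
    ∀ᶠ u in 𝓝 (0 : V), ∃ d : ℕ → V, (∀ j, d j ∈ A j) ∧
      Tendsto (fun n => ∑ j ∈ Finset.range n, d j) atTop (𝓝 u) := by
  obtain ⟨B, hB⟩ := (𝓝 (0 : V)).exists_antitone_basis
  set U : ℕ → Set V := fun j => closure (A j) ∩ B j
  have hU : ∀ j, U j ∈ 𝓝 0 := fun j => inter_mem (hA j) (hB.mem j)
  have hstep : ∀ j, ∀ u ∈ U j, ∃ v ∈ A j, u - v ∈ U (j + 1) := by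
    intro j u hu
    have : (u - ·) ⁻¹' U (j + 1) ∈ 𝓝 u :=
      (continuous_sub_left u).continuousAt.preimage_mem_nhds (by simpa using hU (j + 1))
    obtain ⟨v, hvU, hvA⟩ := mem_closure_iff_nhds.1 hu.1 _ this
    exact ⟨v, hvA, hvU⟩
  choose! v hvA hvU using hstep
  filter_upwards [hU 0] with u hu
  -- `r j` is what remains of `u` after `j` approximation steps.
  let r : ℕ → V := fun n => Nat.rec u (fun j x => x - v j x) n
  have hr : ∀ j, r j ∈ U j := fun j => Nat.rec hu (fun j ih => hvU j _ ih) j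
  have hsum : ∀ n, ∑ j ∈ Finset.range n, v j (r j) = u - r n := by
    intro n
    induction n with
    | zero => simp [r]
    | succ n ih =>
      rw [Finset.sum_range_succ, ih]
      change u - r n + v n (r n) = u - (r n - v n (r n))
      abel
  refine ⟨fun j => v j (r j), fun j => hvA j _ (hr j), ?_⟩
  simpa [hsum] using tendsto_const_nhds.sub (hB.tendsto fun j => (hr j).2)

variable [Module ℝ V] [ContinuousConstSMul ℝ V] [BaireSpace V]

theorem Seminorm.closure_ball_zero_mem_nhds (s : Seminorm ℝ V) {r : ℝ} (hr : 0 < r) :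
    closure (s.ball 0 r) ∈ 𝓝 0 := by
  obtain ⟨n, x, hx⟩ := nonempty_interior_of_iUnion_of_closed
    (f := fun n : ℕ => closure (s.ball 0 (n + 1))) (fun _ => isClosed_closure)
    (eq_univ_of_forall fun y => mem_iUnion.2 <| (exists_nat_gt (s y)).imp fun n hn =>
      subset_closure <| s.mem_ball_zero.2 (by linarith))
  set C := closure (s.ball 0 (n + 1))
  have hC : C ∈ 𝓝 0 := by
    have hx : C ∈ 𝓝 x := mem_interior_iff_mem_nhds.1 hx
    have h₁ : ∀ᶠ y in 𝓝 (0 : V), x + y ∈ C :=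
      (continuous_const.add continuous_id).continuousAt.preimage_mem_nhds (by simpa using hx)
    have h₂ : ∀ᶠ y in 𝓝 (0 : V), x - y ∈ C :=
      (continuous_const.sub continuous_id).continuousAt.preimage_mem_nhds (by simpa using hx)
    filter_upwards [h₁, h₂] with y hy₁ hy₂
    -- `C` is convex and symmetric, and `y = (x + y) / 2 - (x - y) / 2`.
    have := map_mem_closure₂ (f := fun a b : V => (2⁻¹ : ℝ) • a - (2⁻¹ : ℝ) • b)
      (u := s.ball 0 (n + 1)) (by fun_prop)
      hy₁ hy₂ fun a ha b hb => by
        rw [Seminorm.mem_ball_zero] at ha hb ⊢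
        calc s ((2⁻¹ : ℝ) • a - (2⁻¹ : ℝ) • b)
            ≤ s ((2⁻¹ : ℝ) • a) + s ((2⁻¹ : ℝ) • b) := map_sub_le_add _ _ _
          _ = 2⁻¹ * s a + 2⁻¹ * s b := by simp [map_smul_eq_mul]
          _ < n + 1 := by linarith
    convert this using 1
    module
  have hc : (r / (n + 1) : ℝ) ≠ 0 := by positivity
  refine mem_of_superset ((set_smul_mem_nhds_zero_iff hc).2 hC) ?_
  refine (smul_closure_subset _ _).trans (closure_mono ?_)
  rw [s.smul_ball_zero hc, Real.norm_eq_abs, abs_of_pos (by positivity),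
    div_mul_cancel₀ _ (by positivity)]

variable [FirstCountableTopology V] [AddCommGroup W] [Module ℝ W] [UniformSpace W]
  [IsUniformAddGroup W] [CompleteSpace W] {q : SeminormFamily ℝ W ℕ}

theorem WithSeminorms.closedBall_comp_mem_nhds_of_seq_closed_graph (hq : WithSeminorms q)
    (T : V →ₗ[ℝ] W) (hT : ∀ (x : ℕ → V) (a : V) (b : W),
      Tendsto x atTop (𝓝 a) → Tendsto (T ∘ x) atTop (𝓝 b) → b = T a) (i : ℕ) :
    ((q i).comp T).closedBall 0 2 ∈ 𝓝 0 := by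
  -- The `j`-th term of the series is small for `q 0, …, q (i + j)` at once.
  set Q : ℕ → Seminorm ℝ W := fun j => (Finset.range (i + j + 1)).sup q
  have hQ : ∀ {l j}, l ≤ i + j → ∀ y, q l y ≤ Q j y := fun hl =>
    Seminorm.le_def.1 (Finset.le_sup (f := q) (Finset.mem_range.2 (by omega)))
  filter_upwards [eventually_exists_tendsto_sum fun j =>
      ((Q j).comp T).closure_ball_zero_mem_nhds (pow_pos (inv_pos.2 two_pos) j)]
    with u ⟨d, hdA, hdu⟩
  have hd : ∀ {l j}, l ≤ i + j → q l (T (d j)) ≤ 2⁻¹ ^ j := fun hl =>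
    (hQ hl _).trans (((Q _).comp T).mem_ball_zero.1 (hdA _)).le
  have hsummable : Summable fun j => T (d j) := hq.summable_of_summable_seminorm fun l =>
    (summable_nat_add_iff l).1 <|
      (summable_geometric_two.comp_injective (add_left_injective l)).of_nonneg_of_le
        (fun _ => apply_nonneg _ _) fun j => by simpa using hd (j := j + l) (by omega)
  have hlim := hsummable.hasSum.tendsto_sum_nat
  have hTu : ∑' j, T (d j) = T u := hT _ u _ hdu (by simpa [Function.comp_def] using hlim)
  rw [Seminorm.mem_closedBall_zero, Seminorm.comp_apply, ← hTu]
  refine le_of_tendsto ((hq.continuous_seminorm i).tendsto _ |>.comp hlim)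
    (Eventually.of_forall fun n => ?_)
  calc q i (∑ j ∈ Finset.range n, T (d j)) ≤ ∑ j ∈ Finset.range n, q i (T (d j)) :=
        Finset.le_sum_of_subadditive _ (map_zero _).le (map_add_le_add _) _ _
    _ ≤ ∑ j ∈ Finset.range n, (1 / 2 : ℝ) ^ j :=
        Finset.sum_le_sum fun j _ => by simpa using hd (by omega)
    _ ≤ 2 := sum_geometric_two_le n

theorem WithSeminorms.continuous_of_seq_closed_graph (hq : WithSeminorms q) (T : V →ₗ[ℝ] W)
    (hT : ∀ (x : ℕ → V) (a : V) (b : W),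
      Tendsto x atTop (𝓝 a) → Tendsto (T ∘ x) atTop (𝓝 b) → b = T a) :
    Continuous T :=
  hq.continuous_of_continuous_comp T fun i =>
    Seminorm.continuous' (hq.closedBall_comp_mem_nhds_of_seq_closed_graph T hT i)

end ClosedGraph

namespace SPN

variable {V : Type*} [AddCommGroup V] [Module ℝ V] (S : SPN V)

theorem monotone_nu (x : V) : Monotone (S.nu x) := (S.ddf x).1

theorem nu_le_one (x : V) (t : ℝ) : S.nu x t ≤ 1 := ((S.ddf x).2.1 t).2

theorem nu_apply_zero (x : V) : S.nu x 0 = 0 := (S.ddf x).2.2.2.1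

theorem bddAbove_setOf_nu_lt (x : V) {w : ℝ} (hw : w < 1) : BddAbove {t | S.nu x t < w} := by
  obtain ⟨t₀, ht₀⟩ :=
    ((S.proper x).eventually (eventually_gt_nhds hw)).exists_forall_of_atTop
  exact ⟨t₀, fun t ht => le_of_not_gt fun h => (ht₀ t h.le).not_gt ht⟩

theorem pnorm_le_iff {x : V} {w r : ℝ} (hw : w ∈ Ioo (0 : ℝ) 1) :
    pnorm S x w ≤ r ↔ ∀ t, r < t → w ≤ S.nu x t := by
  have hne : {t | S.nu x t < w}.Nonempty := ⟨0, by simpa [nu_apply_zero] using hw.1⟩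
  rw [pnorm, csSup_le_iff (S.bddAbove_setOf_nu_lt x hw.2) hne]
  exact ⟨fun h t hrt => le_of_not_gt fun hlt => (h t hlt).not_gt hrt,
    fun h t ht => le_of_not_gt fun hrt => (h t hrt).not_gt ht⟩

theorem le_nu_of_pnorm_lt {x : V} {w t : ℝ} (hw : w ∈ Ioo (0 : ℝ) 1) (h : pnorm S x w < t) :
    w ≤ S.nu x t :=
  (S.pnorm_le_iff hw).1 le_rfl t h

theorem pnorm_le_of_le_nu {x : V} {w t : ℝ} (hw : w ∈ Ioo (0 : ℝ) 1) (h : w ≤ S.nu x t) :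
    pnorm S x w ≤ t :=
  (S.pnorm_le_iff hw).2 fun _ hs => h.trans (S.monotone_nu x hs.le)

theorem pnorm_zero {w : ℝ} (hw : w ∈ Ioo (0 : ℝ) 1) : pnorm S 0 w = 0 := by
  have : {t | S.nu 0 t < w} = Iic 0 := by
    ext t
    rw [(S.nu_eq_iff 0).2 rfl]
    by_cases ht : 0 < t
    · simp [H0, ht, hw.2.le.not_gt, ht.not_ge]
    · simp [H0, ht, hw.1, not_lt.1 ht]
  rw [pnorm, this, csSup_Iic]

theorem le_nu_add {x y : V} {w s t : ℝ} (hx : w ≤ S.nu x s) (hy : w ≤ S.nu y t) :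
    w ≤ S.nu (x + y) (s + t) := by
  have hbdd : BddAbove (range fun r => min (S.nu x r) (S.nu y (s + t - r))) :=
    ⟨1, by rintro _ ⟨r, rfl⟩; exact (min_le_left _ _).trans (S.nu_le_one x r)⟩
  calc w ≤ min (S.nu x s) (S.nu y (s + t - s)) := by simpa using le_min hx hy
    _ ≤ tauM (S.nu x) (S.nu y) (s + t) := le_ciSup hbdd s
    _ ≤ S.nu (x + y) (s + t) := S.nu_add x y _

theorem pnorm_add_le {w : ℝ} (hw : w ∈ Ioo (0 : ℝ) 1) (x y : V) :
    pnorm S (x + y) w ≤ pnorm S x w + pnorm S y w := by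
  refine (S.pnorm_le_iff hw).2 fun t ht => ?_
  set d := (t - pnorm S x w - pnorm S y w) / 2 with hd
  have hsplit : t = (pnorm S x w + d) + (t - (pnorm S x w + d)) := by ring
  rw [hsplit]
  exact S.le_nu_add (S.le_nu_of_pnorm_lt hw (by linarith)) (S.le_nu_of_pnorm_lt hw (by linarith))

theorem pnorm_smul {w : ℝ} (hw : w ∈ Ioo (0 : ℝ) 1) (a : ℝ) (x : V) :
    pnorm S (a • x) w = |a| * pnorm S x w := by
  rcases eq_or_ne a 0 with rfl | ha
  · simp [S.pnorm_zero hw]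
  have hset : {t | S.nu (a • x) t < w} = |a| • {t | S.nu x t < w} := by
    ext t
    simp [mem_smul_set_iff_inv_smul_mem₀ (abs_ne_zero.2 ha), S.nu_smul a ha, div_eq_inv_mul]
  rw [pnorm, hset, Real.sSup_smul_of_nonneg (abs_nonneg a), smul_eq_mul, pnorm]

def seminorm : SeminormFamily ℝ V (Ioo (0 : ℝ) 1) := fun w =>
  Seminorm.of (fun x => pnorm S x w) (S.pnorm_add_le w.2)
    (fun a x => by rw [Real.norm_eq_abs]; exact S.pnorm_smul w.2 a x)

@[simp]
theorem seminorm_apply (w : Ioo (0 : ℝ) 1) (x : V) : S.seminorm w x = pnorm S x w := rfl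

theorem monotone_seminorm : Monotone S.seminorm :=
  fun w w' (hle : (w : ℝ) ≤ w') _ =>
    (S.pnorm_le_iff w.2).2 fun _ ht => hle.trans (S.le_nu_of_pnorm_lt w'.2 ht)

theorem withSeminorms_strongTop : @WithSeminorms ℝ V _ _ _ _ S.seminorm (strongTop S) := by
  let t : TopologicalSpace V := S.seminorm.moduleFilterBasis.topology
  have hp : WithSeminorms S.seminorm := ⟨rfl⟩
  have := hp.topologicalAddGroup
  refine WithSeminorms.mk (topology := strongTop S)
    (le_antisymm ((le_iff_nhds _ _).2 fun x => ?_) (le_generateFrom ?_))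
  · refine (hp.tendsto_nhds id x).2 fun w ε hε => ?_
    exact @IsOpen.mem_nhds _ (strongTop S) _ _
      (TopologicalSpace.isOpen_generateFrom_of_mem ⟨x, w, ε, w.2, hε, rfl⟩)
      (by simpa [S.pnorm_zero w.2])
  · rintro _ ⟨x, w, r, hw, -, rfl⟩
    exact isOpen_lt ((hp.continuous_seminorm ⟨w, hw⟩).comp (continuous_sub_right x))
      continuous_const

def level (k : ℕ) : Ioo (0 : ℝ) 1 :=
  ⟨1 - ((k : ℝ) + 2)⁻¹, by
    have : ((k : ℝ) + 2)⁻¹ ≤ 2⁻¹ :=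
      inv_anti₀ two_pos (by linarith [k.cast_nonneg (α := ℝ)])
    exact ⟨by linarith, sub_lt_self _ (by positivity)⟩⟩

theorem exists_le_level (w : Ioo (0 : ℝ) 1) : ∃ k, w ≤ level k := by
  obtain ⟨k, hk⟩ := exists_nat_one_div_lt (sub_pos.2 w.2.2)
  refine ⟨k, show (w : ℝ) ≤ 1 - ((k : ℝ) + 2)⁻¹ from ?_⟩
  have : ((k : ℝ) + 2)⁻¹ ≤ 1 / ((k : ℝ) + 1) := by
    rw [one_div]; exact inv_anti₀ (by positivity) (by linarith)
  linarith

def seminormSeq : SeminormFamily ℝ V ℕ := fun k => S.seminorm (level k)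

variable {S}

theorem withSeminorms_seminormSeq [TopologicalSpace V] (hp : WithSeminorms S.seminorm) :
    WithSeminorms S.seminormSeq := by
  refine hp.congr (fun k => ⟨{level k}, 1, by simp [SPN.seminormSeq]⟩) fun w => ?_
  obtain ⟨k, hk⟩ := exists_le_level w
  exact ⟨{k}, 1, by simpa [SPN.seminormSeq] using S.monotone_seminorm hk⟩

theorem tendsto_nhds_zero_iff [TopologicalSpace V] (hp : WithSeminorms S.seminorm) {α : Type*}
    {l : Filter α} {x : α → V} :
    Tendsto x l (𝓝 0) ↔ ∀ t > 0, ∀ᶠ n in l, 1 - t < S.nu (x n) t := by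
  simp only [hp.tendsto_nhds, sub_zero, seminorm_apply]
  constructor
  · intro h t ht
    have hw : 1 - min t 1 / 2 ∈ Ioo (0 : ℝ) 1 := by
      constructor <;> linarith [min_le_right t 1, lt_min ht one_pos]
    filter_upwards [h ⟨_, hw⟩ t ht] with n hn
    linarith [S.le_nu_of_pnorm_lt hw hn, min_le_left t 1]
  · intro h w ε hε
    set t := min (ε / 2) (1 - w)
    have ht : 0 < t := lt_min (by linarith) (sub_pos.2 w.2.2)
    filter_upwards [h t ht] with n hn
    have hwt : (w : ℝ) ≤ S.nu (x n) t := by linarith [min_le_right (ε / 2) (1 - w)]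
    exact (S.pnorm_le_of_le_nu w.2 hwt).trans_lt ((min_le_left _ _).trans_lt (half_lt_self hε))

theorem strongLim_iff_tendsto [TopologicalSpace V] (hp : WithSeminorms S.seminorm) {x : ℕ → V}
    {a : V} : StrongLim S x a ↔ Tendsto x atTop (𝓝 a) := by
  have := hp.topologicalAddGroup
  rw [← tendsto_sub_nhds_zero_iff, S.tendsto_nhds_zero_iff hp]
  simp only [StrongLim, eventually_atTop]

theorem strongCauchy_iff_cauchySeq [UniformSpace V] [IsUniformAddGroup V]
    (hp : WithSeminorms S.seminorm) {x : ℕ → V} : StrongCauchy S x ↔ CauchySeq x := by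
  rw [cauchySeq_iff_tendsto, uniformity_eq_comap_nhds_zero V, tendsto_comap_iff,
    S.tendsto_nhds_zero_iff hp]
  simp only [StrongCauchy, eventually_atTop_prod_self', Function.comp_apply, Prod.map_fst,
    Prod.map_snd]

theorem completeSpace [UniformSpace V] [IsUniformAddGroup V] (hp : WithSeminorms S.seminorm)
    (hS : StrongComplete S) : CompleteSpace V := by
  have := (S.withSeminorms_seminormSeq hp).firstCountableTopology
  have := IsUniformAddGroup.uniformity_countably_generated (α := V)
  refine UniformSpace.complete_of_cauchySeq_tendsto fun x hx => ?_
  obtain ⟨a, ha⟩ := hS x ((S.strongCauchy_iff_cauchySeq hp).2 hx)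
  exact ⟨a, (S.strongLim_iff_tendsto hp).1 ha⟩

theorem baireSpace [TopologicalSpace V] (hp : WithSeminorms S.seminorm) (hS : StrongComplete S) :
    BaireSpace V := by
  have := hp.topologicalAddGroup
  let := IsTopologicalAddGroup.rightUniformSpace V
  have := isUniformAddGroup_of_addCommGroup (G := V)
  have := (S.withSeminorms_seminormSeq hp).firstCountableTopology
  have := IsUniformAddGroup.uniformity_countably_generated (α := V)
  have := S.completeSpace hp hS
  infer_instance

end SPN

/-- Closed Graph Theorem for PN-spaces: a linear operator between strongly complete
Šerstnev PN-spaces whose graph is (sequentially) closed is continuous. -/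
theorem spn_closed_graph {V W : Type*} [AddCommGroup V] [Module ℝ V]
    [AddCommGroup W] [Module ℝ W]
    (S : SPN V) (S' : SPN W) (hV : StrongComplete S) (hW : StrongComplete S')
    (T : V →ₗ[ℝ] W)
    (hclosed : ∀ (x : ℕ → V) (a : V) (b : W),
      StrongLim S x a → StrongLim S' (fun n => T (x n)) b → b = T a) :
    @Continuous V W (strongTop S) (strongTop S') T := by
  let := strongTop S
  let := strongTop S'
  have hp := S.withSeminorms_strongTop
  have hq := S'.withSeminorms_strongTop
  have := hp.topologicalAddGroup
  have := hp.continuousSMul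
  have := (S.withSeminorms_seminormSeq hp).firstCountableTopology
  have := S.baireSpace hp hV
  have := hq.topologicalAddGroup
  let := IsTopologicalAddGroup.rightUniformSpace W
  have := isUniformAddGroup_of_addCommGroup (G := W)
  have := S'.completeSpace hq hW
  refine (S'.withSeminorms_seminormSeq hq).continuous_of_seq_closed_graph T fun x a b hx hb => ?_
  exact hclosed x a b ((S.strongLim_iff_tendsto hp).2 hx) ((S'.strongLim_iff_tendsto hq).2 hb)
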